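/- Let W be the real vector space of 2×2 complex Hermitian matrices, on which g ∈ SL₂(ℂ) acts by g·A = (g⁻¹)ᴴ·A·(g⁻¹). Let P : W → W be the linear map sending [[a, b],[conj(b), d]] to [[a, Re b],[Re b, d]] (replacing the off-diagonal entries by their real parts), and let ‖·‖ denote the Frobenius norm. Then for every A ∈ W whose (1,1)-entry is 0, every k ∈ SU(2), and every t ≥ 0: ‖P((k·a(t))·A)‖ ≤ 4·e^t·‖P(k·A)‖, where a(t) = diag(e^{t/2}, e^{−t/2}). -/

import Mathlib

/-- `a(t) = diag(e^{t/2}, e^{−t/2})` as a complex matrix. -/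
noncomputable def aMatC (t : ℝ) : Matrix (Fin 2) (Fin 2) ℂ :=
  !![(Real.exp (t / 2) : ℂ), 0; 0, (Real.exp (-t / 2) : ℂ)]

/-- The action of `g ∈ SL₂(ℂ)` on `2×2` Hermitian matrices: `g·A = (g⁻¹)ᴴ·A·(g⁻¹)`. -/
noncomputable def hermAct (g A : Matrix (Fin 2) (Fin 2) ℂ) : Matrix (Fin 2) (Fin 2) ℂ :=
  (g⁻¹).conjTranspose * A * g⁻¹

/-- The projection replacing the off-diagonal entries by their real parts (the orthogonal
projection onto the complement of `w₀ = [[0, i], [−i, 0]]`). -/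
noncomputable def projOffDiagRe (A : Matrix (Fin 2) (Fin 2) ℂ) : Matrix (Fin 2) (Fin 2) ℂ :=
  !![A 0 0, ((A 0 1).re : ℂ); ((A 1 0).re : ℂ), A 1 1]

/-- The Frobenius norm of a `2×2` complex matrix. -/
noncomputable def frobNorm (M : Matrix (Fin 2) (Fin 2) ℂ) : ℝ :=
  Real.sqrt (∑ i : Fin 2, ∑ j : Fin 2, ‖M i j‖ ^ 2)

/-
With `d = A 1 1` (real, as `A` is Hermitian) and `A 0 0 = 0`, conjugating by `a(t)⁻¹` only
rescales the lower-right entry, so `(k a(t))·A = k·A + (eᵗ - 1) d · k E₁₁ kᴴ`, where `E₁₁` is the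
matrix unit. The rank-one matrix `k E₁₁ kᴴ = v vᴴ` (`v` a unit column of `k`) has Frobenius norm
at most `1`, and `P` is a real-linear Frobenius contraction. Finally `d = tr(k·A) = tr(P(k·A))`,
as unitary conjugation preserves the trace and `P` the diagonal, so `|d| ≤ 2‖P(k·A)‖`, giving
`‖P((k a(t))·A)‖ ≤ (1 + 2(eᵗ - 1))‖P(k·A)‖ ≤ 4eᵗ‖P(k·A)‖`.
-/

open Matrix
open scoped Matrix.Norms.Frobenius

namespace Matrix
variable {m n α : Type*} [Fintype m] [Fintype n]

theorem norm_apply_le_frobenius_norm [SeminormedAddCommGroup α] (M : Matrix m n α) (i : m)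
    (j : n) : ‖M i j‖ ≤ ‖M‖ := by
  change ‖M i j‖ ≤ ‖WithLp.toLp 2 fun i => WithLp.toLp 2 fun j => M i j‖
  exact (PiLp.norm_apply_le (WithLp.toLp 2 fun j => M i j) j).trans
    (PiLp.norm_apply_le (WithLp.toLp 2 fun i => WithLp.toLp 2 fun j => M i j) i)

theorem frobenius_norm_le_of_forall_norm_apply_le {β : Type*} [SeminormedAddCommGroup α]
    [SeminormedAddCommGroup β] {M : Matrix m n α} {N : Matrix m n β}
    (h : ∀ i j, ‖M i j‖ ≤ ‖N i j‖) : ‖M‖ ≤ ‖N‖ := by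
  rw [frobenius_norm_def, frobenius_norm_def]
  gcongr with i _ j _
  exact h i j

theorem norm_trace_le_card_mul_frobenius_norm [SeminormedAddCommGroup α] (M : Matrix n n α) :
    ‖trace M‖ ≤ Fintype.card n * ‖M‖ :=
  calc ‖trace M‖ ≤ ∑ i, ‖M i i‖ := norm_sum_le _ _
    _ ≤ ∑ _i : n, ‖M‖ := Finset.sum_le_sum fun i _ => M.norm_apply_le_frobenius_norm i i
    _ = Fintype.card n * ‖M‖ := by simp

variable {𝕜 : Type*} [RCLike 𝕜]

theorem norm_col_eq_one_of_conjTranspose_mul_self [DecidableEq n] {k : Matrix n n 𝕜}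
    (hk : kᴴ * k = 1) (j : n) : ‖WithLp.toLp 2 fun i => k i j‖ = 1 := by
  have h := congrFun (congrFun hk j) j
  simp only [mul_apply, conjTranspose_apply, one_apply_eq, RCLike.star_def, RCLike.conj_mul] at h
  rw [EuclideanSpace.norm_eq, ← Real.sqrt_one]
  congr 1
  exact_mod_cast h

theorem mul_single_mul_conjTranspose [DecidableEq n] (k : Matrix n n 𝕜) (j : n) :
    k * single j j 1 * kᴴ =
      replicateCol (Fin 1) (fun i => k i j) * (replicateCol (Fin 1) (fun i => k i j))ᴴ := by
  ext a b
  simp [mul_apply, single_apply, ite_and, Finset.sum_ite_eq]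

theorem frobenius_norm_mul_single_mul_conjTranspose_le_one [DecidableEq n] {k : Matrix n n 𝕜}
    (hk : kᴴ * k = 1) (j : n) : ‖k * single j j 1 * kᴴ‖ ≤ 1 := by
  have hcol : ‖replicateCol (Fin 1) (fun i => k i j)‖ = 1 :=
    (frobenius_norm_replicateCol _).trans (norm_col_eq_one_of_conjTranspose_mul_self hk j)
  rw [mul_single_mul_conjTranspose]
  refine (frobenius_norm_mul _ _).trans ?_
  rw [frobenius_norm_conjTranspose, hcol, one_mul]

end Matrix

open Real

lemma frobNorm_eq_norm (M : Matrix (Fin 2) (Fin 2) ℂ) : frobNorm M = ‖M‖ := by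
  rw [frobNorm, frobenius_norm_def, Real.sqrt_eq_rpow]
  simp only [Real.rpow_two]

lemma projOffDiagRe_add (X Y : Matrix (Fin 2) (Fin 2) ℂ) :
    projOffDiagRe (X + Y) = projOffDiagRe X + projOffDiagRe Y := by
  ext i j
  fin_cases i <;> fin_cases j <;> simp [projOffDiagRe]

lemma projOffDiagRe_smul (r : ℝ) (X : Matrix (Fin 2) (Fin 2) ℂ) :
    projOffDiagRe (r • X) = r • projOffDiagRe X := by
  ext i j
  fin_cases i <;> fin_cases j <;> simp [projOffDiagRe, Complex.real_smul]

lemma norm_projOffDiagRe_le (X : Matrix (Fin 2) (Fin 2) ℂ) : ‖projOffDiagRe X‖ ≤ ‖X‖ :=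
  frobenius_norm_le_of_forall_norm_apply_le fun i j => by
    fin_cases i <;> fin_cases j <;> simp [projOffDiagRe, Complex.abs_re_le_norm]

lemma trace_projOffDiagRe (X : Matrix (Fin 2) (Fin 2) ℂ) :
    trace (projOffDiagRe X) = trace X := by
  simp [trace_fin_two, projOffDiagRe]

lemma hermAct_mul (g h A : Matrix (Fin 2) (Fin 2) ℂ) :
    hermAct (g * h) A = hermAct g (hermAct h A) := by
  simp only [hermAct, Matrix.mul_inv_rev, conjTranspose_mul, Matrix.mul_assoc]

lemma hermAct_add_smul (g A B : Matrix (Fin 2) (Fin 2) ℂ) (r : ℝ) :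
    hermAct g (A + r • B) = hermAct g A + r • hermAct g B := by
  simp only [hermAct, Matrix.mul_add, Matrix.add_mul, Matrix.mul_smul, Matrix.smul_mul]

lemma hermAct_of_conjTranspose_mul_self {k : Matrix (Fin 2) (Fin 2) ℂ} (hk : kᴴ * k = 1)
    (A : Matrix (Fin 2) (Fin 2) ℂ) : hermAct k A = k * A * kᴴ := by
  rw [hermAct, inv_eq_left_inv hk, conjTranspose_conjTranspose]

lemma trace_hermAct_of_conjTranspose_mul_self {k : Matrix (Fin 2) (Fin 2) ℂ} (hk : kᴴ * k = 1)
    (A : Matrix (Fin 2) (Fin 2) ℂ) : trace (hermAct k A) = trace A := by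
  rw [hermAct_of_conjTranspose_mul_self hk, trace_mul_cycle, hk, Matrix.one_mul]

lemma aMatC_mul_aMatC_neg (t : ℝ) : aMatC t * aMatC (-t) = 1 := by
  simp [aMatC, one_fin_two, ← Complex.exp_add, neg_div]

lemma conjTranspose_aMatC (t : ℝ) : (aMatC t)ᴴ = aMatC t := by
  ext i j
  fin_cases i <;> fin_cases j <;> simp [aMatC, -Complex.ofReal_exp, Complex.conj_ofReal]

lemma hermAct_aMatC (t : ℝ) (A : Matrix (Fin 2) (Fin 2) ℂ) :
    hermAct (aMatC t) A = !![Complex.exp (-t) * A 0 0, A 0 1; A 1 0, Complex.exp t * A 1 1] := by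
  rw [hermAct, inv_eq_right_inv (aMatC_mul_aMatC_neg t), conjTranspose_aMatC, eta_fin_two A]
  ext i j
  fin_cases i <;> fin_cases j <;> simp [aMatC] <;>
    rw [mul_right_comm, ← Complex.exp_add] <;> ring_nf <;> simp

lemma hermAct_aMatC_of_apply_zero_zero {A : Matrix (Fin 2) (Fin 2) ℂ} (hA : A.IsHermitian)
    (h00 : A 0 0 = 0) (t : ℝ) :
    hermAct (aMatC t) A = A + ((exp t - 1) * (A 1 1).re) • single 1 1 1 := by
  have h11 : ((A 1 1).re : ℂ) = A 1 1 := hA.coe_re_apply_self 1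
  rw [hermAct_aMatC]
  ext i j
  fin_cases i <;> fin_cases j <;> simp [h00, h11, Complex.real_smul]
  ring

theorem noncontracting_projection_bound_general (A : Matrix (Fin 2) (Fin 2) ℂ)
    (hA : A.IsHermitian) (hA11 : A 0 0 = 0)
    (k : Matrix (Fin 2) (Fin 2) ℂ) (hk : k.conjTranspose * k = 1)
    (t : ℝ) (ht : 0 ≤ t) :
    frobNorm (projOffDiagRe (hermAct (k * aMatC t) A)) ≤
      4 * Real.exp t * frobNorm (projOffDiagRe (hermAct k A)) := by
  set d := (A 1 1).re
  set Q := k * single 1 1 1 * kᴴ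
  set L := ‖projOffDiagRe (hermAct k A)‖
  have hdecomp : hermAct (k * aMatC t) A = hermAct k A + ((exp t - 1) * d) • Q := by
    rw [hermAct_mul, hermAct_aMatC_of_apply_zero_zero hA hA11, hermAct_add_smul,
      hermAct_of_conjTranspose_mul_self hk (single 1 1 1)]
  have hQ : ‖projOffDiagRe Q‖ ≤ 1 :=
    (norm_projOffDiagRe_le Q).trans (frobenius_norm_mul_single_mul_conjTranspose_le_one hk 1)
  have hd : |d| ≤ 2 * L := by
    have htrace : trace (projOffDiagRe (hermAct k A)) = d := by
      rw [trace_projOffDiagRe, trace_hermAct_of_conjTranspose_mul_self hk, trace_fin_two, hA11,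
        zero_add]
      exact (hA.coe_re_apply_self 1).symm
    simpa [htrace] using norm_trace_le_card_mul_frobenius_norm (projOffDiagRe (hermAct k A))
  have hE : 1 ≤ exp t := one_le_exp ht
  rw [frobNorm_eq_norm, frobNorm_eq_norm, hdecomp, projOffDiagRe_add, projOffDiagRe_smul]
  calc ‖projOffDiagRe (hermAct k A) + ((exp t - 1) * d) • projOffDiagRe Q‖
      ≤ L + (exp t - 1) * |d| * ‖projOffDiagRe Q‖ := by
        refine (norm_add_le _ _).trans_eq ?_
        rw [norm_smul, Real.norm_eq_abs, abs_mul, abs_of_nonneg (by linarith)]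
    _ ≤ L + (exp t - 1) * (2 * L) * 1 := by gcongr
    _ ≤ 4 * exp t * L := by nlinarith [norm_nonneg (projOffDiagRe (hermAct k A))]

/-- **Claim 4.33.**  For a Hermitian `A` with vanishing `(1,1)` entry, `k ∈ SU(2)` and
`t ≥ 0`:  `‖P((k·a(t))·A)‖ ≤ 4·eᵗ·‖P(k·A)‖`, where `·` denotes the action
`g·A = (g⁻¹)ᴴ A g⁻¹` and `P` replaces the off-diagonal entries by their real parts. -/
theorem noncontracting_projection_bound (A : Matrix (Fin 2) (Fin 2) ℂ)
    (hA : A.IsHermitian) (hA11 : A 0 0 = 0)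
    (k : Matrix (Fin 2) (Fin 2) ℂ) (hk : k.conjTranspose * k = 1) (hkdet : k.det = 1)
    (t : ℝ) (ht : 0 ≤ t) :
    frobNorm (projOffDiagRe (hermAct (k * aMatC t) A)) ≤
      4 * Real.exp t * frobNorm (projOffDiagRe (hermAct k A)) :=
  noncontracting_projection_bound_general A hA hA11 k hk t ht
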